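/- Let p, q ≥ 0 with p + q ≤ 1 and let ξ ∈ ℂ³ be any unit vector. Then p/2 + 3q/10 is an eigenvalue of the matrix N_{p,q}(ξξ*); equivalently, det(N_{p,q}(ξξ*) − (p/2 + 3q/10)·Id₃) = 0. -/

import Mathlib

open Matrix BigOperators
open scoped Kronecker ComplexOrder

noncomputable section


/-- `Φ^{2→2}_2`. -/
def Phi2 (A : Matrix (Fin 3) (Fin 3) ℂ) : Matrix (Fin 3) (Fin 3) ℂ :=
  (1 / 2 : ℂ) •
    !![A 0 0 + A 1 1, A 1 2, -(A 0 2);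
       A 2 1, A 0 0 + A 2 2, A 0 1;
       -(A 2 0), A 1 0, A 1 1 + A 2 2]

/-- `Φ^{2→2}_4`. -/
def Phi4 (A : Matrix (Fin 3) (Fin 3) ℂ) : Matrix (Fin 3) (Fin 3) ℂ :=
  (1 / 10 : ℂ) •
    !![A 0 0 + 3 * A 1 1 + 6 * A 2 2, -2 * A 0 1 - 3 * A 1 2, A 0 2;
       -2 * A 1 0 - 3 * A 2 1, 3 * A 0 0 + 4 * A 1 1 + 3 * A 2 2, -3 * A 0 1 - 2 * A 1 2;
       A 2 0, -3 * A 1 0 - 2 * A 2 1, 6 * A 0 0 + 3 * A 1 1 + A 2 2]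

/-- `N_{p,q} = (1-p-q)Φ₀ + pΦ₂ + qΦ₄` (with `Φ₀ = id`). -/
def Nmap (p q : ℝ) (A : Matrix (Fin 3) (Fin 3) ℂ) : Matrix (Fin 3) (Fin 3) ℂ :=
  ((1 - p - q : ℝ) : ℂ) • A + ((p : ℝ) : ℂ) • Phi2 A + ((q : ℝ) : ℂ) • Phi4 A

set_option maxHeartbeats 2000000 in
/-- for `p, q ≥ 0` with `p + q ≤ 1` and any unit vector `ξ ∈ ℂ³`,
`p/2 + 3q/10` is an eigenvalue of `N_{p,q}(ξξ*)`, i.e.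
`det(N_{p,q}(ξξ*) - (p/2 + 3q/10)·Id₃) = 0`. -/
theorem stmt_10 (p q : ℝ) (hp : 0 ≤ p) (hq : 0 ≤ q) (hpq : p + q ≤ 1)
    (ξ : Fin 3 → ℂ) (hξ : ∑ i, ‖ξ i‖ ^ 2 = 1) :
    (Nmap p q (Matrix.vecMulVec ξ (star ξ))
        - ((p / 2 + 3 * q / 10 : ℝ) : ℂ) • (1 : Matrix (Fin 3) (Fin 3) ℂ)).det = 0 := by
  have hs : ξ 0 * starRingEnd ℂ (ξ 0) + ξ 1 * starRingEnd ℂ (ξ 1) + ξ 2 * starRingEnd ℂ (ξ 2)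
      = 1 := by
    have h := congrArg (Complex.ofReal) hξ
    push_cast at h
    simpa [Fin.sum_univ_three, Complex.mul_conj, Complex.normSq_eq_norm_sq] using h
  simp only [Nmap, Phi2, Phi4, Matrix.det_fin_three, Matrix.vecMulVec_apply, Matrix.smul_apply,
    Matrix.add_apply, Matrix.sub_apply, Matrix.one_fin_three, Pi.star_apply, RCLike.star_def,
    Matrix.cons_val', Matrix.cons_val_zero, Matrix.cons_val_one, Matrix.head_cons,
    Matrix.empty_val', Matrix.cons_val_fin_one, Matrix.head_fin_const, Matrix.of_apply, Matrix.cons_val_two, Matrix.tail_cons, smul_eq_mul, Matrix.vecHead, Matrix.vecTail, Function.comp]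
  norm_num
  linear_combination ((-1:ℂ)*(p:ℂ)^3*(ξ 0)*(ξ 2)*(starRingEnd ℂ (ξ 0))*(starRingEnd ℂ (ξ 2)) +
    (1/2:ℂ)*(p:ℂ)^3*(ξ 0)*(ξ 2)*(starRingEnd ℂ (ξ 1))^2 +
    (1/2:ℂ)*(p:ℂ)^3*(ξ 1)^2*(starRingEnd ℂ (ξ 0))*(starRingEnd ℂ (ξ 2)) +
    (-1/4:ℂ)*(p:ℂ)^3*(ξ 1)^2*(starRingEnd ℂ (ξ 1))^2 +
    (-3/20:ℂ)*(p:ℂ)^2*(q:ℂ)*(ξ 0)^2*(starRingEnd ℂ (ξ 0))^2 +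
    (-3/10:ℂ)*(p:ℂ)^2*(q:ℂ)*(ξ 0)*(ξ 1)*(starRingEnd ℂ (ξ 0))*(starRingEnd ℂ (ξ 1)) +
    (-3/2:ℂ)*(p:ℂ)^2*(q:ℂ)*(ξ 0)*(ξ 2)*(starRingEnd ℂ (ξ 0))*(starRingEnd ℂ (ξ 2)) +
    (3/5:ℂ)*(p:ℂ)^2*(q:ℂ)*(ξ 0)*(ξ 2)*(starRingEnd ℂ (ξ 1))^2 +
    (3/5:ℂ)*(p:ℂ)^2*(q:ℂ)*(ξ 1)^2*(starRingEnd ℂ (ξ 0))*(starRingEnd ℂ (ξ 2)) +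
    (-9/20:ℂ)*(p:ℂ)^2*(q:ℂ)*(ξ 1)^2*(starRingEnd ℂ (ξ 1))^2 +
    (-3/10:ℂ)*(p:ℂ)^2*(q:ℂ)*(ξ 1)*(ξ 2)*(starRingEnd ℂ (ξ 1))*(starRingEnd ℂ (ξ 2)) +
    (-3/20:ℂ)*(p:ℂ)^2*(q:ℂ)*(ξ 2)^2*(starRingEnd ℂ (ξ 2))^2 +
    (-9/25:ℂ)*(p:ℂ)*(q:ℂ)^2*(ξ 0)^2*(starRingEnd ℂ (ξ 0))^2 +
    (-18/25:ℂ)*(p:ℂ)*(q:ℂ)^2*(ξ 0)*(ξ 1)*(starRingEnd ℂ (ξ 0))*(starRingEnd ℂ (ξ 1)) +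
    (-9/25:ℂ)*(p:ℂ)*(q:ℂ)^2*(ξ 0)*(ξ 2)*(starRingEnd ℂ (ξ 0))*(starRingEnd ℂ (ξ 2)) +
    (-9/50:ℂ)*(p:ℂ)*(q:ℂ)^2*(ξ 0)*(ξ 2)*(starRingEnd ℂ (ξ 1))^2 +
    (-9/50:ℂ)*(p:ℂ)*(q:ℂ)^2*(ξ 1)^2*(starRingEnd ℂ (ξ 0))*(starRingEnd ℂ (ξ 2)) +
    (-27/100:ℂ)*(p:ℂ)*(q:ℂ)^2*(ξ 1)^2*(starRingEnd ℂ (ξ 1))^2 +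
    (-18/25:ℂ)*(p:ℂ)*(q:ℂ)^2*(ξ 1)*(ξ 2)*(starRingEnd ℂ (ξ 1))*(starRingEnd ℂ (ξ 2)) +
    (-9/25:ℂ)*(p:ℂ)*(q:ℂ)^2*(ξ 2)^2*(starRingEnd ℂ (ξ 2))^2 +
    (-81/500:ℂ)*(q:ℂ)^3*(ξ 0)^2*(starRingEnd ℂ (ξ 0))^2 +
    (-81/250:ℂ)*(q:ℂ)^3*(ξ 0)*(ξ 1)*(starRingEnd ℂ (ξ 0))*(starRingEnd ℂ (ξ 1)) +
    (27/250:ℂ)*(q:ℂ)^3*(ξ 0)*(ξ 2)*(starRingEnd ℂ (ξ 0))*(starRingEnd ℂ (ξ 2)) +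
    (-27/125:ℂ)*(q:ℂ)^3*(ξ 0)*(ξ 2)*(starRingEnd ℂ (ξ 1))^2 +
    (-27/125:ℂ)*(q:ℂ)^3*(ξ 1)^2*(starRingEnd ℂ (ξ 0))*(starRingEnd ℂ (ξ 2)) +
    (-27/500:ℂ)*(q:ℂ)^3*(ξ 1)^2*(starRingEnd ℂ (ξ 1))^2 +
    (-81/250:ℂ)*(q:ℂ)^3*(ξ 1)*(ξ 2)*(starRingEnd ℂ (ξ 1))*(starRingEnd ℂ (ξ 2)) +
    (-81/500:ℂ)*(q:ℂ)^3*(ξ 2)^2*(starRingEnd ℂ (ξ 2))^2 +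
    (1:ℂ)*(p:ℂ)^2*(ξ 0)*(ξ 2)*(starRingEnd ℂ (ξ 0))*(starRingEnd ℂ (ξ 2)) +
    (-1/2:ℂ)*(p:ℂ)^2*(ξ 0)*(ξ 2)*(starRingEnd ℂ (ξ 1))^2 +
    (-1/2:ℂ)*(p:ℂ)^2*(ξ 1)^2*(starRingEnd ℂ (ξ 0))*(starRingEnd ℂ (ξ 2)) +
    (1/4:ℂ)*(p:ℂ)^2*(ξ 1)^2*(starRingEnd ℂ (ξ 1))^2 +
    (3/10:ℂ)*(p:ℂ)*(q:ℂ)*(ξ 0)^2*(starRingEnd ℂ (ξ 0))^2 +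
    (3/5:ℂ)*(p:ℂ)*(q:ℂ)*(ξ 0)*(ξ 1)*(starRingEnd ℂ (ξ 0))*(starRingEnd ℂ (ξ 1)) +
    (3/5:ℂ)*(p:ℂ)*(q:ℂ)*(ξ 0)*(ξ 2)*(starRingEnd ℂ (ξ 0))*(starRingEnd ℂ (ξ 2)) +
    (3/10:ℂ)*(p:ℂ)*(q:ℂ)*(ξ 1)^2*(starRingEnd ℂ (ξ 1))^2 +
    (3/5:ℂ)*(p:ℂ)*(q:ℂ)*(ξ 1)*(ξ 2)*(starRingEnd ℂ (ξ 1))*(starRingEnd ℂ (ξ 2)) +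
    (3/10:ℂ)*(p:ℂ)*(q:ℂ)*(ξ 2)^2*(starRingEnd ℂ (ξ 2))^2 +
    (9/50:ℂ)*(q:ℂ)^2*(ξ 0)^2*(starRingEnd ℂ (ξ 0))^2 +
    (9/25:ℂ)*(q:ℂ)^2*(ξ 0)*(ξ 1)*(starRingEnd ℂ (ξ 0))*(starRingEnd ℂ (ξ 1)) +
    (9/50:ℂ)*(q:ℂ)^2*(ξ 0)*(ξ 2)*(starRingEnd ℂ (ξ 1))^2 +
    (9/50:ℂ)*(q:ℂ)^2*(ξ 1)^2*(starRingEnd ℂ (ξ 0))*(starRingEnd ℂ (ξ 2)) +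
    (9/100:ℂ)*(q:ℂ)^2*(ξ 1)^2*(starRingEnd ℂ (ξ 1))^2 +
    (9/25:ℂ)*(q:ℂ)^2*(ξ 1)*(ξ 2)*(starRingEnd ℂ (ξ 1))*(starRingEnd ℂ (ξ 2)) +
    (9/50:ℂ)*(q:ℂ)^2*(ξ 2)^2*(starRingEnd ℂ (ξ 2))^2 +
    (1/8:ℂ)*(p:ℂ)^3*(ξ 0)*(starRingEnd ℂ (ξ 0)) +
    (1/8:ℂ)*(p:ℂ)^3*(ξ 1)*(starRingEnd ℂ (ξ 1)) +
    (1/8:ℂ)*(p:ℂ)^3*(ξ 2)*(starRingEnd ℂ (ξ 2)) +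
    (9/40:ℂ)*(p:ℂ)^2*(q:ℂ)*(ξ 0)*(starRingEnd ℂ (ξ 0)) +
    (9/40:ℂ)*(p:ℂ)^2*(q:ℂ)*(ξ 1)*(starRingEnd ℂ (ξ 1)) +
    (9/40:ℂ)*(p:ℂ)^2*(q:ℂ)*(ξ 2)*(starRingEnd ℂ (ξ 2)) +
    (27/200:ℂ)*(p:ℂ)*(q:ℂ)^2*(ξ 0)*(starRingEnd ℂ (ξ 0)) +
    (27/200:ℂ)*(p:ℂ)*(q:ℂ)^2*(ξ 1)*(starRingEnd ℂ (ξ 1)) +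
    (27/200:ℂ)*(p:ℂ)*(q:ℂ)^2*(ξ 2)*(starRingEnd ℂ (ξ 2)) +
    (27/1000:ℂ)*(q:ℂ)^3*(ξ 0)*(starRingEnd ℂ (ξ 0)) +
    (27/1000:ℂ)*(q:ℂ)^3*(ξ 1)*(starRingEnd ℂ (ξ 1)) +
    (27/1000:ℂ)*(q:ℂ)^3*(ξ 2)*(starRingEnd ℂ (ξ 2)) +
    (-1/4:ℂ)*(p:ℂ)^2*(ξ 0)*(starRingEnd ℂ (ξ 0)) +
    (-1/4:ℂ)*(p:ℂ)^2*(ξ 1)*(starRingEnd ℂ (ξ 1)) +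
    (-1/4:ℂ)*(p:ℂ)^2*(ξ 2)*(starRingEnd ℂ (ξ 2)) +
    (-3/10:ℂ)*(p:ℂ)*(q:ℂ)*(ξ 0)*(starRingEnd ℂ (ξ 0)) +
    (-3/10:ℂ)*(p:ℂ)*(q:ℂ)*(ξ 1)*(starRingEnd ℂ (ξ 1)) +
    (-3/10:ℂ)*(p:ℂ)*(q:ℂ)*(ξ 2)*(starRingEnd ℂ (ξ 2)) +
    (-9/100:ℂ)*(q:ℂ)^2*(ξ 0)*(starRingEnd ℂ (ξ 0)) +
    (-9/100:ℂ)*(q:ℂ)^2*(ξ 1)*(starRingEnd ℂ (ξ 1)) +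
    (-9/100:ℂ)*(q:ℂ)^2*(ξ 2)*(starRingEnd ℂ (ξ 2)) +
    (1/8:ℂ)*(p:ℂ)^3 +
    (9/40:ℂ)*(p:ℂ)^2*(q:ℂ) +
    (27/200:ℂ)*(p:ℂ)*(q:ℂ)^2 +
    (27/1000:ℂ)*(q:ℂ)^3) * hs


end
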